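/- arXiv:0910.0298 — 2 statements merged into one kernel-verified Lean document; each statement's English description precedes it below -/
import Mathlib

section
/- Let ζ(d) = (1/(d-2))·√((d-1)(d²-2)/2). For all integers d ≥ 4 and m ≥ 3, if m < ζ(d), then the inequality (2d-3)·C(m+d-2, d) ≥ C(m+d, d) - (m·d + 1) is false; i.e., (2d-3)·C(m+d-2, d) < C(m+d, d) - (m·d + 1). -/
/-- ζ(d) = (1/(d-2))·√((d-1)(d²-2)/2). -/
noncomputable def zeta (d : ℕ) : ℝ :=
  (1 / ((d : ℝ) - 2)) * Real.sqrt (((d : ℝ) - 1) * ((d : ℝ) ^ 2 - 2) / 2)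

private lemma my_choose_mono {n a b : ℕ} (hab : a ≤ b) (hb : 2 * b ≤ n) :
    n.choose a ≤ n.choose b := by
  induction b, hab using Nat.le_induction with
  | base => exact le_rfl
  | succ b hb' ih =>
    exact le_trans (ih (by omega))
      (Nat.choose_le_succ_of_lt_half_left (by omega))

private lemma key_ineq (x y A B : ℝ) (hx0 : 0 ≤ x) (hy0 : 0 ≤ y)
    (hNR2 : 2 * (y + 13) ^ 2 * (x + 3) ^ 2 < (y + 14) * ((y + 15) ^ 2 - 2))
    (hkeyR : (x + y + 18) * ((x + y + 17) * B) = A * ((x + 3) * (x + 2)))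
    (hB16 : y + 16 ≤ B) :
    (2 * (y + 15) - 3) * B < A - ((x + 3) * (y + 15) + 1) := by
  have hmd : (x + 3) ^ 2 ≤ y + 14 := by
    by_contra hc
    push_neg at hc
    nlinarith [hNR2, mul_le_mul_of_nonneg_left (le_of_lt hc)
      (show (0:ℝ) ≤ 2 * (y + 13) ^ 2 by positivity), hy0, mul_nonneg hy0 hy0]
  have hBpos : (0:ℝ) < B := by linarith
  have hA : (y + 14) * (4 * x + 9)
      < (x + y + 18) * (x + y + 17) - (2 * (y + 15) - 3) * ((x + 3) * (x + 2)) := by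
    have key : (y + 13) * ((y + 14) * (4 * x + 9))
        < (y + 13) * ((x + y + 18) * (x + y + 17)
            - (2 * (y + 15) - 3) * ((x + 3) * (x + 2))) := by
      nlinarith [hNR2, hy0, mul_nonneg hy0 hy0, hx0, mul_nonneg hx0 hy0]
    exact lt_of_mul_lt_mul_left key (by linarith)
  have h5 : ((x + 3) * (y + 15) + 1) * ((x + 3) * (x + 2))
      ≤ (4 * x + 9) * ((y + 14) * (y + 16)) := by
    nlinarith [hmd, hx0, hy0,
      mul_le_mul_of_nonneg_right hmd (show (0:ℝ) ≤ (x + 3) * (y + 16) by positivity),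
      mul_nonneg hx0 hy0, mul_nonneg (mul_nonneg hx0 hx0) hy0,
      mul_nonneg (mul_nonneg (mul_nonneg hx0 hx0) hx0) hy0,
      mul_nonneg hx0 (mul_nonneg hy0 hy0), mul_nonneg hy0 hy0,
      mul_nonneg hx0 hx0, mul_nonneg (mul_nonneg hx0 hx0) hx0]
  have h6 : (4 * x + 9) * ((y + 14) * (y + 16))
      ≤ ((y + 14) * (4 * x + 9)) * B := by
    nlinarith [mul_le_mul_of_nonneg_left hB16
      (show (0:ℝ) ≤ (y + 14) * (4 * x + 9) by positivity)]
  have h7 : ((y + 14) * (4 * x + 9)) * B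
      < ((x + y + 18) * (x + y + 17) - (2 * (y + 15) - 3) * ((x + 3) * (x + 2))) * B :=
    mul_lt_mul_of_pos_right hA hBpos
  have hchain : ((x + 3) * (y + 15) + 1) * ((x + 3) * (x + 2))
      < ((x + y + 18) * (x + y + 17) - (2 * (y + 15) - 3) * ((x + 3) * (x + 2))) * B := by
    linarith [h5, h6, h7]
  have hfin : ((2 * (y + 15) - 3) * B + ((x + 3) * (y + 15) + 1)) * ((x + 3) * (x + 2))
      < A * ((x + 3) * (x + 2)) := by
    nlinarith [hchain, hkeyR]
  have hpos : (0:ℝ) < (x + 3) * (x + 2) := by positivity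
  have hfin2 : (2 * (y + 15) - 3) * B + ((x + 3) * (y + 15) + 1) < A :=
    lt_of_mul_lt_mul_right hfin (le_of_lt hpos)
  linarith [hfin2]

set_option maxHeartbeats 1000000 in
/-- If `m < ζ(d)` then `(2d-3)·C(m+d-2,d) < C(m+d,d) - (m·d+1)`. -/
theorem stmt_0 (d m : ℕ) (hd : 4 ≤ d) (hm : 3 ≤ m) (h : (m : ℝ) < zeta d) :
    (2 * (d : ℝ) - 3) * (Nat.choose (m + d - 2) d : ℝ) <
      (Nat.choose (m + d) d : ℝ) - ((m : ℝ) * d + 1) := by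
  have hd2 : (0:ℝ) < (d:ℝ) - 2 := by
    have : (4:ℝ) ≤ (d:ℝ) := by exact_mod_cast hd
    linarith
  have hx : ((d:ℝ) - 2) * m < Real.sqrt (((d : ℝ) - 1) * ((d : ℝ) ^ 2 - 2) / 2) := by
    unfold zeta at h
    rw [div_mul_eq_mul_div, one_mul, lt_div_iff₀ hd2] at h
    linarith [h]
  have hNR : (((d:ℝ) - 2) * m) ^ 2 < ((d : ℝ) - 1) * ((d : ℝ) ^ 2 - 2) / 2 := by
    rw [← Real.lt_sqrt (by positivity)]
    exact hx
  have hNN : 2 * (d - 2) ^ 2 * m ^ 2 < (d - 1) * (d ^ 2 - 2) := by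
    have h16 : 4 ^ 2 ≤ d ^ 2 := Nat.pow_le_pow_left hd 2
    have : ((2 * (d - 2) ^ 2 * m ^ 2 : ℕ) : ℝ) < (((d - 1) * (d ^ 2 - 2) : ℕ) : ℝ) := by
      push_cast [Nat.cast_sub (show 2 ≤ d by omega), Nat.cast_sub (show 1 ≤ d by omega),
        Nat.cast_sub (show 2 ≤ d ^ 2 by omega)]
      nlinarith [hNR]
    exact_mod_cast this
  have hm9 : 9 ≤ m ^ 2 := by
    have := Nat.pow_le_pow_left hm 2; omega
  have hd15 : 15 ≤ d := by
    by_contra hc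
    push_neg at hc
    have h1 : 2 * (d - 2) ^ 2 * 9 ≤ 2 * (d - 2) ^ 2 * m ^ 2 :=
      Nat.mul_le_mul_left _ hm9
    interval_cases d <;> omega
  obtain ⟨m', rfl⟩ : ∃ m', m = m' + 3 := ⟨m - 3, by omega⟩
  obtain ⟨d', rfl⟩ : ∃ d', d = d' + 15 := ⟨d - 15, by omega⟩
  have hx0 : (0:ℝ) ≤ (m' : ℝ) := Nat.cast_nonneg _
  have hy0 : (0:ℝ) ≤ (d' : ℝ) := Nat.cast_nonneg _
  have hNR2 : 2 * ((d' : ℝ) + 13) ^ 2 * ((m' : ℝ) + 3) ^ 2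
      < ((d' : ℝ) + 14) * (((d' : ℝ) + 15) ^ 2 - 2) := by
    have := hNR
    push_cast at this
    nlinarith [this]
  have hm'le : m' ≤ d' + 5 := by
    have hR : (m' : ℝ) ≤ (d' : ℝ) + 5 := by
      have hmd : ((m' : ℝ) + 3) ^ 2 ≤ (d' : ℝ) + 14 := by
        by_contra hc
        push_neg at hc
        nlinarith [hNR2, mul_le_mul_of_nonneg_left (le_of_lt hc)
          (show (0:ℝ) ≤ 2 * ((d' : ℝ) + 13) ^ 2 by positivity), hy0, mul_nonneg hy0 hy0]
      nlinarith [hmd, hx0]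
    exact_mod_cast hR
  -- rewrite the binomial coefficients
  have e0 : m' + 3 + (d' + 15) - 2 = m' + d' + 16 := by omega
  have e0' : m' + 3 + (d' + 15) = m' + d' + 18 := by omega
  rw [e0, e0']
  have esymm1 : Nat.choose (m' + d' + 16) (d' + 15) = Nat.choose (m' + d' + 16) (m' + 1) := by
    rw [← Nat.choose_symm (show m' + 1 ≤ m' + d' + 16 by omega)]
    congr 1; omega
  have esymm2 : Nat.choose (m' + d' + 18) (d' + 15) = Nat.choose (m' + d' + 18) (m' + 3) := by
    rw [← Nat.choose_symm (show m' + 3 ≤ m' + d' + 18 by omega)]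
    congr 1; omega
  rw [esymm1, esymm2]
  -- key identity
  have e1 : (m' + d' + 18) * Nat.choose (m' + d' + 17) (m' + 2)
      = Nat.choose (m' + d' + 18) (m' + 3) * (m' + 3) := by
    have := Nat.add_one_mul_choose_eq (m' + d' + 17) (m' + 2)
    simpa [Nat.succ_eq_add_one, show m' + d' + 17 + 1 = m' + d' + 18 by omega,
      show m' + 2 + 1 = m' + 3 by omega] using this
  have e2 : (m' + d' + 17) * Nat.choose (m' + d' + 16) (m' + 1)
      = Nat.choose (m' + d' + 17) (m' + 2) * (m' + 2) := by
    have := Nat.add_one_mul_choose_eq (m' + d' + 16) (m' + 1)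
    simpa [Nat.succ_eq_add_one, show m' + d' + 16 + 1 = m' + d' + 17 by omega,
      show m' + 1 + 1 = m' + 2 by omega] using this
  have hkeyN : (m' + d' + 18) * ((m' + d' + 17) * Nat.choose (m' + d' + 16) (m' + 1))
      = Nat.choose (m' + d' + 18) (m' + 3) * ((m' + 3) * (m' + 2)) := by
    rw [e2, ← mul_assoc, e1]; ring
  have hkeyR : ((m' : ℝ) + (d' : ℝ) + 18) * (((m' : ℝ) + (d' : ℝ) + 17)
        * (Nat.choose (m' + d' + 16) (m' + 1) : ℝ))
      = (Nat.choose (m' + d' + 18) (m' + 3) : ℝ) * (((m' : ℝ) + 3) * ((m' : ℝ) + 2)) := by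
    exact_mod_cast congrArg (Nat.cast : ℕ → ℝ) hkeyN
  -- lower bound on B
  have hBN : d' + 16 ≤ Nat.choose (m' + d' + 16) (m' + 1) := by
    have h1 : Nat.choose (m' + d' + 16) 1 ≤ Nat.choose (m' + d' + 16) (m' + 1) :=
      my_choose_mono (by omega) (by omega)
    rw [Nat.choose_one_right] at h1
    omega
  have hB16 : (d' : ℝ) + 16 ≤ (Nat.choose (m' + d' + 16) (m' + 1) : ℝ) := by
    exact_mod_cast hBN
  have := key_ineq (m' : ℝ) (d' : ℝ) (Nat.choose (m' + d' + 18) (m' + 3) : ℝ)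
    (Nat.choose (m' + d' + 16) (m' + 1) : ℝ) hx0 hy0 hNR2 hkeyR hB16
  push_cast
  push_cast at this
  linarith [this]
end

section
/- Let d ≥ 4. If m ≥ 4 and m < ζ(d), where ζ(d) = (1/(d-2))·√((d-1)(d²-2)/2), then Q(d,m) < -8(d-2), where Q(d,m) = (2d-3)(m-1)m - (m+d-1)(m+d). -/
/-- For `d ≥ 4`, `m ≥ 4` and `m < ζ(d)`, we have `Q(d,m) < -8(d-2)`. -/
theorem stmt_8 (d m : ℕ) (hd : 4 ≤ d) (hm : 4 ≤ m)
    (h : (m : ℝ) < (1 / ((d : ℝ) - 2)) * Real.sqrt (((d : ℝ) - 1) * ((d : ℝ) ^ 2 - 2) / 2)) :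
    (2 * (d : ℝ) - 3) * ((m : ℝ) - 1) * m - ((m : ℝ) + d - 1) * ((m : ℝ) + d) <
      -8 * ((d : ℝ) - 2) := by
  have hD : (4 : ℝ) ≤ (d : ℝ) := by exact_mod_cast hd
  have hM : (4 : ℝ) ≤ (m : ℝ) := by exact_mod_cast hm
  have hpos : (0 : ℝ) < (d : ℝ) - 2 := by linarith
  have h2 : ((d : ℝ) - 2) * m < Real.sqrt (((d : ℝ) - 1) * ((d : ℝ) ^ 2 - 2) / 2) := by
    have := (mul_lt_mul_iff_right₀ hpos).mpr h
    rwa [← mul_assoc, mul_one_div, div_self (ne_of_gt hpos), one_mul] at this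
  have h3 : (((d : ℝ) - 2) * m) ^ 2 < ((d : ℝ) - 1) * ((d : ℝ) ^ 2 - 2) / 2 := by
    have hnn : (0 : ℝ) ≤ ((d : ℝ) - 2) * m := by positivity
    exact (Real.lt_sqrt hnn).mp h2
  nlinarith [sq_nonneg ((d : ℝ) - 2), mul_pos hpos hpos, mul_nonneg hpos.le (sub_nonneg.mpr hM)]
end
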